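/- Let X be compact metric, h : X → [0,∞) bounded continuous, f̃ : K(X) → [0,1] upper semicontinuous, and Pₖ ⇀ P weakly-* finite positive measures on K(X) with uniformly bounded average stopping times ∫ T(γ) dPₖ ≤ C. Then limsup_{k→∞} ∫ h(π_∞(γ)) f̃(γ) dPₖ(γ) ≤ ∫ h(π_∞(γ)) f̃(γ) dP(γ), where π_∞(γ) is the final point of γ. (The proof truncates at time M via Chebyshev: Pₖ({T > M}) ≤ C/M, uses continuity of γ ↦ γ(M), and lets M → ∞.) -/

import Mathlib

open scoped NNReal ENNReal
open MeasureTheory Filter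

/-- The space `K(X)` of 1-Lipschitz eventually constant curves `[0,∞) → X`,
topologized by uniform convergence on compact sets. -/
abbrev KX (X : Type*) [MetricSpace X] : Type _ :=
  {γ : C(ℝ≥0, X) // LipschitzWith 1 γ ∧ ∃ T : ℝ≥0, ∀ t, T ≤ t → γ t = γ T}

/-- The stopping time `T(γ)`: the least `T` such that `γ` is constant on `[T,∞)`. -/
noncomputable def stopTime {X : Type*} [MetricSpace X] (γ : KX X) : ℝ≥0 :=
  sInf {T : ℝ≥0 | ∀ t, T ≤ t → γ.1 t = γ.1 T}

/-!
Truncate at an integer time `n`. The integrand `γ ↦ h (γ n) * f̃ γ` is upper semicontinuous, so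
the portmanteau theorem bounds the limsup of its `Pₖ`-integrals by its `P`-integral. It differs
from `h (π_∞ γ) * f̃ γ` only on `{T > n}`, whose `Pₖ`-mass is at most `C / n` by Chebyshev, and
under `P` the truncated integrals converge to the untruncated one by dominated convergence.
The argument is run for lower integrals in `ℝ≥0∞`, where limsups need no boundedness side
conditions, and converted to Bochner integrals at the end.
-/

open scoped Topology BoundedContinuousFunction

lemma upperSemicontinuous_mul_of_nonneg {α : Type*} [TopologicalSpace α] {f g : α → ℝ}
    (hf : Continuous f) (hf0 : 0 ≤ f) (hg : UpperSemicontinuous g) (hg0 : 0 ≤ g) :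
    UpperSemicontinuous (f * g) := by
  intro x c hc
  have hcont : ContinuousAt (fun δ : ℝ => (f x + δ) * (g x + δ)) 0 := by fun_prop
  obtain ⟨δ, hδc, hδ⟩ := ((hcont.tendsto.eventually_lt_const (by simpa using hc)).filter_mono
    nhdsWithin_le_nhds |>.and (self_mem_nhdsWithin (s := Set.Ioi 0))).exists
  filter_upwards [hf.continuousAt.eventually_lt_const (lt_add_of_pos_right (f x) hδ),
    hg x (g x + δ) (lt_add_of_pos_right _ hδ)] with y hfy hgy
  calc f y * g y ≤ (f x + δ) * (g x + δ) :=
        mul_le_mul hfy.le hgy.le (hg0 y) (add_nonneg (hf0 x) hδ.le)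
    _ < c := hδc

lemma limsup_measure_closed_le_of_forall_tendsto_integral {Ω ι : Type*} [MeasurableSpace Ω]
    [TopologicalSpace Ω] [HasOuterApproxClosed Ω] [OpensMeasurableSpace Ω] {L : Filter ι}
    {μ : Measure Ω} [IsFiniteMeasure μ] {μs : ι → Measure Ω} [∀ i, IsFiniteMeasure (μs i)]
    (hconv : ∀ g : Ω →ᵇ ℝ, Tendsto (fun i => ∫ x, g x ∂μs i) L (𝓝 (∫ x, g x ∂μ)))
    {s : Set Ω} (hs : IsClosed s) :
    limsup (fun i => μs i s) L ≤ μ s :=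
  FiniteMeasure.limsup_measure_closed_le_of_tendsto (μ := ⟨μ, inferInstance⟩)
    (μs := fun i => ⟨μs i, inferInstance⟩)
    (FiniteMeasure.tendsto_iff_forall_integral_tendsto.2 hconv) hs

/-- Layer-cake formula: the superlevel sets of `g` are closed, and the uniform mass bound makes
reverse Fatou applicable to the levels `t ∈ (0, B]`. -/
lemma limsup_lintegral_le_of_upperSemicontinuous {Ω : Type*} [MeasurableSpace Ω]
    [TopologicalSpace Ω] [OpensMeasurableSpace Ω] {μ : Measure Ω} {μs : ℕ → Measure Ω}
    (hclosed : ∀ s, IsClosed s → limsup (fun k => μs k s) atTop ≤ μ s)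
    {m : ℝ≥0∞} (hm : m ≠ ⊤) (hμs : ∀ k, μs k Set.univ ≤ m)
    {g : Ω → ℝ} (hg : UpperSemicontinuous g) (hg0 : 0 ≤ g) {B : ℝ} (hgB : ∀ x, g x ≤ B) :
    limsup (fun k => ∫⁻ x, ENNReal.ofReal (g x) ∂μs k) atTop ≤
      ∫⁻ x, ENNReal.ofReal (g x) ∂μ := by
  simp only [fun ν : Measure Ω => lintegral_eq_lintegral_meas_le ν (.of_forall hg0)
    hg.measurable.aemeasurable]
  have hlevel_meas : ∀ k, Measurable fun t : ℝ => μs k {x | t ≤ g x} :=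
    fun k => Antitone.measurable fun s t hst => measure_mono fun x hx => hst.trans hx
  have hlevel_le : ∀ k, (fun t : ℝ => μs k {x | t ≤ g x}) ≤ᵐ[volume.restrict (Set.Ioi 0)]
      (Set.Ioc 0 B).indicator fun _ => m := by
    refine fun k => (ae_restrict_iff' measurableSet_Ioi).2 (.of_forall fun t ht => ?_)
    by_cases htB : t ≤ B
    · rw [Set.indicator_of_mem (Set.mem_Ioc.2 ⟨ht, htB⟩)]
      exact (measure_mono (Set.subset_univ _)).trans (hμs k)
    · have hempty : {x | t ≤ g x} = ∅ :=
        Set.eq_empty_of_forall_notMem fun x hx => htB (hx.trans (hgB x))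
      simp [hempty]
  have hdom_fin : ∫⁻ t in Set.Ioi 0, (Set.Ioc (0 : ℝ) B).indicator (fun _ => m) t ≠ ⊤ := by
    rw [lintegral_indicator measurableSet_Ioc, setLIntegral_const,
      Measure.restrict_apply measurableSet_Ioc]
    exact ENNReal.mul_ne_top hm
      (measure_mono Set.inter_subset_left |>.trans_lt measure_Ioc_lt_top).ne
  refine (limsup_lintegral_le _ hlevel_meas hlevel_le hdom_fin).trans
    (lintegral_mono fun t => ?_)
  have hcompl : {x | t ≤ g x} = (g ⁻¹' Set.Iio t)ᶜ := by ext; simp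
  exact hclosed _ (hcompl ▸ (hg.isOpen_preimage t).isClosed_compl)

lemma limsup_integral_le_of_limsup_lintegral_le {Ω : Type*} [MeasurableSpace Ω]
    {μ : Measure Ω} [IsFiniteMeasure μ] {μs : ℕ → Measure Ω}
    {m : ℝ≥0∞} (hm : m ≠ ⊤) (hμs : ∀ k, μs k Set.univ ≤ m)
    {g : Ω → ℝ} (hg : Measurable g) (hg0 : 0 ≤ g) {B : ℝ} (hgB : ∀ x, g x ≤ B)
    (hlim : limsup (fun k => ∫⁻ x, ENNReal.ofReal (g x) ∂μs k) atTop ≤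
      ∫⁻ x, ENNReal.ofReal (g x) ∂μ) :
    limsup (fun k => ∫ x, g x ∂μs k) atTop ≤ ∫ x, g x ∂μ := by
  have hbound : ∀ ν : Measure Ω,
      ∫⁻ x, ENNReal.ofReal (g x) ∂ν ≤ ENNReal.ofReal B * ν Set.univ :=
    fun ν => (lintegral_mono fun x => ENNReal.ofReal_le_ofReal (hgB x)).trans_eq
      (lintegral_const _)
  simp only [fun ν : Measure Ω => integral_eq_lintegral_of_nonneg_ae (.of_forall hg0)
    hg.aestronglyMeasurable (μ := ν)]
  rw [ENNReal.limsup_toReal_eq (ENNReal.mul_ne_top ENNReal.ofReal_ne_top hm)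
    (.of_forall fun k => (hbound _).trans (by gcongr; exact hμs k))]
  exact ENNReal.toReal_mono
    ((hbound μ).trans_lt (ENNReal.mul_lt_top ENNReal.ofReal_lt_top (measure_lt_top _ _))).ne hlim

lemma lintegral_le_lintegral_add_mul_measure {α : Type*} [MeasurableSpace α] (μ : Measure α)
    {f g : α → ℝ≥0∞} {s : Set α} (hs : MeasurableSet s) {B : ℝ≥0∞}
    (hfB : ∀ x ∈ s, f x ≤ B) (hfg : ∀ x ∉ s, f x ≤ g x) :
    ∫⁻ x, f x ∂μ ≤ ∫⁻ x, g x ∂μ + B * μ s := by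
  calc ∫⁻ x, f x ∂μ ≤ ∫⁻ x, g x + s.indicator (fun _ => B) x ∂μ := by
        refine lintegral_mono fun x => ?_
        by_cases hx : x ∈ s
        · simpa [hx] using le_add_left (hfB x hx)
        · simpa [hx] using hfg x hx
    _ = ∫⁻ x, g x ∂μ + B * μ s := by
        rw [lintegral_add_right _ (measurable_const.indicator hs), lintegral_indicator_const hs]

namespace KX

variable {X : Type*} [MetricSpace X]

instance : TopologicalSpace.PseudoMetrizableSpace (KX X) :=
  Topology.IsInducing.subtypeVal.pseudoMetrizableSpace

lemma continuous_eval (t : ℝ≥0) : Continuous fun γ : KX X => γ.1 t :=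
  (ContinuousEvalConst.continuous_eval_const t).comp continuous_subtype_val

/-- The infimum defining `stopTime γ` is attained, by continuity of `γ`. -/
lemma eval_eq_of_stopTime_le (γ : KX X) {t : ℝ≥0} (ht : stopTime γ ≤ t) :
    γ.1 t = γ.1 (stopTime γ) := by
  rcases ht.eq_or_lt with rfl | hlt
  · rfl
  have hconst : ∀ᶠ s in 𝓝[>] stopTime γ, γ.1 t = γ.1 s := by
    filter_upwards [Ioo_mem_nhdsGT hlt] with s hs
    obtain ⟨T, hT, hTs⟩ := exists_lt_of_csInf_lt γ.2.2 hs.1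
    rw [hT s hTs.le, hT t (hTs.le.trans hs.2.le)]
  exact tendsto_nhds_unique (tendsto_const_nhds.congr' hconst)
    ((γ.1.continuous.tendsto _).mono_left nhdsWithin_le_nhds)

lemma tendsto_eval_natCast (γ : KX X) :
    Tendsto (fun n : ℕ => γ.1 n) atTop (𝓝 (γ.1 (stopTime γ))) := by
  obtain ⟨N, hN⟩ := exists_nat_ge (stopTime γ)
  exact tendsto_atTop_of_eventually_const fun n (hn : N ≤ n) =>
    eval_eq_of_stopTime_le γ (hN.trans (by exact_mod_cast hn))

lemma isClosed_setOf_stopTime_le (M : ℝ≥0) : IsClosed {γ : KX X | stopTime γ ≤ M} := by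
  have hset : {γ : KX X | stopTime γ ≤ M} = ⋂ t ∈ Set.Ici M, {γ | γ.1 t = γ.1 M} := by
    ext γ
    simp only [Set.mem_ofPred_eq, Set.mem_iInter, Set.mem_Ici]
    refine ⟨fun hγ t ht => ?_, fun hγ => csInf_le (OrderBot.bddBelow _) hγ⟩
    rw [eval_eq_of_stopTime_le γ (hγ.trans ht), eval_eq_of_stopTime_le γ hγ]
  rw [hset]
  exact isClosed_biInter fun t _ => isClosed_eq (continuous_eval t) (continuous_eval M)

lemma tendsto_comp_eval_natCast {Y : Type*} [TopologicalSpace Y] {Φ : X → KX X → Y}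
    (hΦ : ∀ γ, Continuous (Φ · γ)) (γ : KX X) :
    Tendsto (fun n : ℕ => Φ (γ.1 n) γ) atTop (𝓝 (Φ (γ.1 (stopTime γ)) γ)) :=
  ((hΦ γ).tendsto _).comp (tendsto_eval_natCast γ)

variable [MeasurableSpace (KX X)]

lemma measurable_comp_endpoint {Y : Type*} [TopologicalSpace Y]
    [TopologicalSpace.PseudoMetrizableSpace Y] [MeasurableSpace Y] [BorelSpace Y]
    {Φ : X → KX X → Y}
    (hΦ : ∀ γ, Continuous (Φ · γ)) (hΦn : ∀ n : ℕ, Measurable fun γ => Φ (γ.1 n) γ) :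
    Measurable fun γ => Φ (γ.1 (stopTime γ)) γ :=
  measurable_of_tendsto_metrizable hΦn <| tendsto_pi_nhds.2 (tendsto_comp_eval_natCast hΦ)

lemma tendsto_lintegral_comp_eval_natCast (μ : Measure (KX X)) [IsFiniteMeasure μ]
    {Φ : X → KX X → ℝ≥0∞} {B : ℝ≥0∞}
    (hΦ : ∀ γ, Continuous (Φ · γ)) (hΦn : ∀ n : ℕ, Measurable fun γ => Φ (γ.1 n) γ)
    (hB : B ≠ ⊤) (hΦB : ∀ x γ, Φ x γ ≤ B) :
    Tendsto (fun n : ℕ => ∫⁻ γ, Φ (γ.1 n) γ ∂μ) atTop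
      (𝓝 (∫⁻ γ, Φ (γ.1 (stopTime γ)) γ ∂μ)) :=
  tendsto_lintegral_of_dominated_convergence (fun _ => B) hΦn
    (fun n => .of_forall fun γ => hΦB _ γ)
    (by simpa using ENNReal.mul_ne_top hB (measure_ne_top μ Set.univ))
    (.of_forall (tendsto_comp_eval_natCast hΦ))

variable [BorelSpace (KX X)]

lemma measurable_stopTime : Measurable (stopTime : KX X → ℝ≥0) :=
  measurable_of_Iic fun M => (isClosed_setOf_stopTime_le M).measurableSet

/-- Truncation at time `M`: on `{stopTime ≤ M}` the endpoint is `γ M`, and Chebyshev's inequality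
bounds the mass of the complement by the average stopping time divided by `M`. -/
lemma lintegral_endpoint_le (ν : Measure (KX X)) {Φ : X → KX X → ℝ≥0∞} {B : ℝ≥0∞}
    (hΦB : ∀ x γ, Φ x γ ≤ B) {M : ℝ≥0} (hM : M ≠ 0) :
    ∫⁻ γ, Φ (γ.1 (stopTime γ)) γ ∂ν ≤
      ∫⁻ γ, Φ (γ.1 M) γ ∂ν + B * ((∫⁻ γ, (stopTime γ : ℝ≥0∞) ∂ν) / M) := by
  have htail : MeasurableSet {γ : KX X | M < stopTime γ} :=
    measurable_stopTime measurableSet_Ioi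
  have hcheb : ν {γ | M < stopTime γ} ≤ (∫⁻ γ, (stopTime γ : ℝ≥0∞) ∂ν) / M :=
    calc ν {γ | M < stopTime γ} ≤ ν {γ | (M : ℝ≥0∞) ≤ stopTime γ} :=
          measure_mono fun γ (hγ : M < stopTime γ) => by exact_mod_cast hγ.le
      _ ≤ _ := meas_ge_le_lintegral_div measurable_stopTime.coe_nnreal_ennreal.aemeasurable
          (by exact_mod_cast hM) ENNReal.coe_ne_top
  calc ∫⁻ γ, Φ (γ.1 (stopTime γ)) γ ∂ν
      ≤ ∫⁻ γ, Φ (γ.1 M) γ ∂ν + B * ν {γ | M < stopTime γ} :=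
        lintegral_le_lintegral_add_mul_measure ν htail (fun γ _ => hΦB _ γ) fun γ hγ => by
          rw [eval_eq_of_stopTime_le γ (not_lt.1 hγ)]
    _ ≤ _ := by gcongr

lemma limsup_lintegral_endpoint_le_add {ι : Type*} {L : Filter ι} {Pk : ι → Measure (KX X)}
    {c : ℝ≥0∞} (hT : ∀ k, ∫⁻ γ, (stopTime γ : ℝ≥0∞) ∂Pk k ≤ c)
    {Φ : X → KX X → ℝ≥0∞} {B : ℝ≥0∞} (hΦB : ∀ x γ, Φ x γ ≤ B)
    {n : ℕ} (hn : n ≠ 0) :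
    limsup (fun k => ∫⁻ γ, Φ (γ.1 (stopTime γ)) γ ∂Pk k) L ≤
      limsup (fun k => ∫⁻ γ, Φ (γ.1 n) γ ∂Pk k) L + B * (c / n) := by
  rcases L.eq_or_neBot with rfl | hL
  · simp
  rw [← limsup_add_const _ _ _ (by isBoundedDefault) (by isBoundedDefault)]
  refine limsup_le_limsup (.of_forall fun k => ?_)
  refine (lintegral_endpoint_le (Pk k) hΦB (Nat.cast_ne_zero.2 hn)).trans ?_
  rw [ENNReal.coe_natCast]
  exact add_le_add_right (mul_le_mul_right (ENNReal.div_le_div_right (hT k) _) _) _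

lemma limsup_lintegral_endpoint_le {P : Measure (KX X)} [IsFiniteMeasure P]
    {Pk : ℕ → Measure (KX X)}
    (hclosed : ∀ s, IsClosed s → limsup (fun k => Pk k s) atTop ≤ P s)
    {m : ℝ≥0∞} (hm : m ≠ ⊤) (hPk : ∀ k, Pk k Set.univ ≤ m)
    {c : ℝ≥0∞} (hc : c ≠ ⊤) (hT : ∀ k, ∫⁻ γ, (stopTime γ : ℝ≥0∞) ∂Pk k ≤ c)
    {h : X → ℝ} (hh : Continuous h) (hh0 : 0 ≤ h) {B : ℝ} (hhB : ∀ x, h x ≤ B)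
    {f : KX X → ℝ} (hf : UpperSemicontinuous f) (hf0 : 0 ≤ f) (hf1 : ∀ γ, f γ ≤ 1) :
    limsup (fun k => ∫⁻ γ, ENNReal.ofReal (h (γ.1 (stopTime γ)) * f γ) ∂Pk k) atTop ≤
      ∫⁻ γ, ENNReal.ofReal (h (γ.1 (stopTime γ)) * f γ) ∂P := by
  have hbound : ∀ x γ, ENNReal.ofReal (h x * f γ) ≤ ENNReal.ofReal B := fun x γ =>
    ENNReal.ofReal_le_ofReal ((mul_le_of_le_one_right (hh0 x) (hf1 γ)).trans (hhB x))
  have husc (n : ℕ) : UpperSemicontinuous fun γ : KX X => h (γ.1 n) * f γ :=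
    upperSemicontinuous_mul_of_nonneg (hh.comp (continuous_eval n)) (fun γ => hh0 _) hf hf0
  have htrunc (n : ℕ) (hn : n ≠ 0) :
      limsup (fun k => ∫⁻ γ, ENNReal.ofReal (h (γ.1 (stopTime γ)) * f γ) ∂Pk k) atTop ≤
        ∫⁻ γ, ENNReal.ofReal (h (γ.1 n) * f γ) ∂P + ENNReal.ofReal B * (c / n) := by
    refine (limsup_lintegral_endpoint_le_add hT hbound hn).trans (add_le_add_left ?_ _)
    exact limsup_lintegral_le_of_upperSemicontinuous (g := fun γ => h (γ.1 n) * f γ)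
      hclosed hm hPk (husc n) (fun γ => mul_nonneg (hh0 _) (hf0 γ))
      fun γ => (mul_le_of_le_one_right (hh0 _) (hf1 γ)).trans (hhB _)
  have hdom := tendsto_lintegral_comp_eval_natCast P
    (fun γ => ENNReal.continuous_ofReal.comp (hh.mul continuous_const))
    (fun n => ENNReal.measurable_ofReal.comp (husc n).measurable) ENNReal.ofReal_ne_top hbound
  have herror : Tendsto (fun n : ℕ => ENNReal.ofReal B * (c / n)) atTop (𝓝 0) := by
    simpa [div_eq_mul_inv] using ENNReal.Tendsto.const_mul
      (ENNReal.Tendsto.const_mul ENNReal.tendsto_inv_nat_nhds_zero (Or.inr hc))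
      (Or.inr ENNReal.ofReal_ne_top)
  exact ge_of_tendsto (by simpa using hdom.add herror) ((eventually_ne_atTop 0).mono htrunc)

end KX

theorem stmt_19_general {X : Type*} [MetricSpace X]
    [MeasurableSpace (KX X)] [BorelSpace (KX X)]
    (h : X → ℝ) (hh : Continuous h) (hh0 : ∀ x, 0 ≤ h x) (hhbd : ∃ C : ℝ, ∀ x, h x ≤ C)
    (ft : KX X → ℝ) (hft : UpperSemicontinuous ft)
    (hft01 : ∀ γ, ft γ ∈ Set.Icc (0 : ℝ) 1)
    (Pk : ℕ → Measure (KX X)) (P : Measure (KX X))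
    [∀ k, IsFiniteMeasure (Pk k)] [IsFiniteMeasure P]
    (hmass : ∃ C : ℝ≥0∞, C < ⊤ ∧ ∀ k, Pk k Set.univ ≤ C)
    (hconv : ∀ g : KX X → ℝ, Continuous g → (∃ C : ℝ, ∀ γ, |g γ| ≤ C) →
      Tendsto (fun k => ∫ γ, g γ ∂(Pk k)) atTop (nhds (∫ γ, g γ ∂P)))
    (C : ℝ)
    (hT : ∀ k, ∫⁻ γ, (stopTime γ : ℝ≥0∞) ∂(Pk k) ≤ ENNReal.ofReal C) :
    limsup (fun k => ∫ γ, h (γ.1 (stopTime γ)) * ft γ ∂(Pk k)) atTop ≤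
      ∫ γ, h (γ.1 (stopTime γ)) * ft γ ∂P := by
  obtain ⟨m, hm, hPk⟩ := hmass
  obtain ⟨B, hhB⟩ := hhbd
  have hclosed : ∀ s, IsClosed s → limsup (fun k => Pk k s) atTop ≤ P s :=
    fun s => limsup_measure_closed_le_of_forall_tendsto_integral
      (fun g => hconv g g.continuous ⟨‖g‖, g.norm_coe_le_norm⟩)
  have hmeas : Measurable fun γ : KX X => h (γ.1 (stopTime γ)) * ft γ :=
    KX.measurable_comp_endpoint (Φ := fun x γ => h x * ft γ) (fun γ => hh.mul continuous_const)
      fun n => (hh.comp (KX.continuous_eval n)).measurable.mul hft.measurable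
  exact limsup_integral_le_of_limsup_lintegral_le hm.ne hPk hmeas
    (fun γ => mul_nonneg (hh0 _) (hft01 γ).1)
    (fun γ => (mul_le_of_le_one_right (hh0 _) (hft01 γ).2).trans (hhB _))
    (KX.limsup_lintegral_endpoint_le hclosed hm.ne hPk ENNReal.ofReal_ne_top hT hh hh0 hhB hft
      (fun γ => (hft01 γ).1) fun γ => (hft01 γ).2)

/-- for `h : X → [0,∞)` bounded continuous, `f̃ : K(X) → [0,1]`
upper semicontinuous, and `Pₖ ⇀ P` weakly-* with uniformly bounded masses and
uniformly bounded average stopping times `∫ T dPₖ ≤ C`, one has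
`limsup_k ∫ h(π_∞ γ) f̃(γ) dPₖ ≤ ∫ h(π_∞ γ) f̃(γ) dP`, where `π_∞ γ = γ(T(γ))`. -/
theorem stmt_19 {X : Type*} [MetricSpace X] [CompactSpace X]
    [MeasurableSpace X] [BorelSpace X]
    [MeasurableSpace (KX X)] [BorelSpace (KX X)]
    (h : X → ℝ) (hh : Continuous h) (hh0 : ∀ x, 0 ≤ h x) (hhbd : ∃ C : ℝ, ∀ x, h x ≤ C)
    (ft : KX X → ℝ) (hft : UpperSemicontinuous ft)
    (hft01 : ∀ γ, ft γ ∈ Set.Icc (0 : ℝ) 1)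
    (Pk : ℕ → Measure (KX X)) (P : Measure (KX X))
    [∀ k, IsFiniteMeasure (Pk k)] [IsFiniteMeasure P]
    (hmass : ∃ C : ℝ≥0∞, C < ⊤ ∧ ∀ k, Pk k Set.univ ≤ C)
    (hconv : ∀ g : KX X → ℝ, Continuous g → (∃ C : ℝ, ∀ γ, |g γ| ≤ C) →
      Tendsto (fun k => ∫ γ, g γ ∂(Pk k)) atTop (nhds (∫ γ, g γ ∂P)))
    (C : ℝ) (hC : 0 < C)
    (hT : ∀ k, ∫⁻ γ, (stopTime γ : ℝ≥0∞) ∂(Pk k) ≤ ENNReal.ofReal C) :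
    limsup (fun k => ∫ γ, h (γ.1 (stopTime γ)) * ft γ ∂(Pk k)) atTop ≤
      ∫ γ, h (γ.1 (stopTime γ)) * ft γ ∂P :=
  stmt_19_general h hh hh0 hhbd ft hft hft01 Pk P hmass hconv C hT
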